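/- Let R be an F-finite Noetherian ring of prime characteristic p and M an R-module. For every x ∈ R and every q = pᵉ, one has I_{e+1}(x^{pq-1}, M) ⊆ I_e(x^{q-1}, M). Moreover, if R is reduced, x is a non-zerodivisor and the pair (R, x) is F-pure, then I_e(x^{pᵉ-1}, M) = M for every integer e ≥ 0. -/

import Mathlib

/-!
A map `φ : ᵉ⁺¹R → M` precomposed with `z ↦ z ^ p * s` is a map `ᵉR → M`.  Writing an arbitrary
coefficient as `c = ∑ dᵢ ^ p gᵢ` by F-finiteness, `φ (c y ^ p) = ∑ φ ((dᵢ y) ^ p gᵢ)` is a sum of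
values of such maps at `dᵢ y ∈ 𝔞`; hence `I_{e+1}(𝔞^{[p]}, M) ⊆ I_e(𝔞, M)`, and the first claim
follows from `x ^ (pq - 1) = x ^ (p - 1) (x ^ (q - 1)) ^ p`.  For the second, a splitting
`φ : ᵉR → R` with `φ (x ^ (q - 1)) = 1` gives, for each `m ∈ M`, the map `z ↦ φ z • m` sending
`x ^ (q - 1)` to `m`.
-/

universe u v

section Defs

/-- The submodule `I_e(𝔞, M) = Hom_R(ᵉR, M) · 𝔞 ⊆ M`.  An additive map `φ : R →+ M` is an
`R`-linear map `ᵉR → M` precisely when `φ (r ^ p ^ e * y) = r • φ y` for all `r, y ∈ R`. -/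
def frobIe (p e : ℕ) (R : Type u) (M : Type v) [CommRing R] [AddCommGroup M]
    [Module R M] (a : Ideal R) : Submodule R M :=
  Submodule.span R
    {m | ∃ φ : R →+ M, (∀ r y : R, φ (r ^ p ^ e * y) = r • φ y) ∧ ∃ y ∈ a, φ y = m}

/-- `R` is F-finite: `¹R` is a finitely generated `R`-module. -/
def FFinite (p : ℕ) (R : Type u) [CommRing R] : Prop :=
  ∃ (n : ℕ) (g : Fin n → R), ∀ r : R, ∃ c : Fin n → R, r = ∑ i, c i ^ p * g i

/-- The pair `(R, x)` is F-pure: for every `q = pᵉ` the inclusion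
`x^{(q-1)/q} R ↪ R^{1/q}` splits; equivalently, for every `e` there is an `R`-linear map
`ᵉR → R` sending `x^{pᵉ - 1}` to `1`. -/
def FPurePair (p : ℕ) (R : Type u) [CommRing R] (x : R) : Prop :=
  ∀ e : ℕ, ∃ φ : R →+ R,
    (∀ r y : R, φ (r ^ p ^ e * y) = r * φ y) ∧ φ (x ^ (p ^ e - 1)) = 1

end Defs

theorem pow_mul_sub_one {M : Type*} [Monoid M] (x : M) {p q : ℕ} (hp : 0 < p) (hq : 0 < q) :
    x ^ (p * q - 1) = x ^ (p - 1) * (x ^ (q - 1)) ^ p := by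
  rw [← pow_mul, ← pow_add]
  congr 1
  obtain ⟨p, rfl⟩ := Nat.exists_eq_add_one_of_ne_zero hp.ne'
  obtain ⟨q, rfl⟩ := Nat.exists_eq_add_one_of_ne_zero hq.ne'
  rw [show (p + 1) * (q + 1) = p + (q + 1 - 1) * (p + 1) + 1 by simp; ring]
  rfl

section FrobIe

variable {p e : ℕ} {R : Type u} {M : Type v} [CommRing R] [AddCommGroup M] [Module R M]

theorem apply_mem_frobIe {a : Ideal R} (φ : R →+ M)
    (hφ : ∀ r y : R, φ (r ^ p ^ e * y) = r • φ y) {y : R} (hy : y ∈ a) :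
    φ y ∈ frobIe p e R M a :=
  Submodule.subset_span ⟨φ, hφ, y, hy, rfl⟩

theorem frobIe_mono {a b : Ideal R} (hab : a ≤ b) : frobIe p e R M a ≤ frobIe p e R M b :=
  Submodule.span_mono fun _ ⟨φ, hφ, y, hy, hφy⟩ => ⟨φ, hφ, y, hab hy, hφy⟩

theorem frobIe_eq_top_of_apply_eq_one {a : Ideal R} (φ : R →+ R)
    (hφ : ∀ r y : R, φ (r ^ p ^ e * y) = r * φ y) {y : R} (hy : y ∈ a) (hφy : φ y = 1) :
    frobIe p e R M a = ⊤ := by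
  refine eq_top_iff.2 fun m _ => ?_
  let ψ : R →+ M := (LinearMap.toSpanSingleton R M m).toAddMonoidHom.comp φ
  have hψ : ∀ r z : R, ψ (r ^ p ^ e * z) = r • ψ z := fun r z => by
    simp [ψ, hφ, mul_smul]
  simpa [ψ, hφy] using apply_mem_frobIe ψ hψ hy

variable [Fact p.Prime] [CharP R p]

theorem frobenius_mul_right_linear (φ : R →+ M)
    (hφ : ∀ r y : R, φ (r ^ p ^ (e + 1) * y) = r • φ y) (s r z : R) :
    φ (frobenius R p (r ^ p ^ e * z) * s) = r • φ (frobenius R p z * s) := by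
  rw [← hφ, frobenius_def, frobenius_def, mul_pow, ← pow_mul, ← pow_succ, mul_assoc]

theorem apply_mul_frobenius_mem_frobIe (hFF : FFinite p R) {a : Ideal R} (φ : R →+ M)
    (hφ : ∀ r y : R, φ (r ^ p ^ (e + 1) * y) = r • φ y) (c : R) {y : R} (hy : y ∈ a) :
    φ (c * frobenius R p y) ∈ frobIe p e R M a := by
  obtain ⟨n, g, hg⟩ := hFF
  obtain ⟨d, rfl⟩ := hg c
  have hsum : φ ((∑ i, d i ^ p * g i) * frobenius R p y) =
      ∑ i, (φ.comp (AddMonoidHom.mulRight (g i))).comp (frobenius R p).toAddMonoidHom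
        (d i * y) := by
    simp only [Finset.sum_mul, map_sum, AddMonoidHom.coe_comp, Function.comp_apply,
      RingHom.toAddMonoidHom_eq_coe, AddMonoidHom.coe_coe, AddMonoidHom.coe_mulRight,
      map_mul, frobenius_def]
    exact Finset.sum_congr rfl fun i _ => by ring_nf
  rw [hsum]
  exact Submodule.sum_mem _ fun i _ =>
    apply_mem_frobIe _ (frobenius_mul_right_linear φ hφ (g i)) (a.mul_mem_left _ hy)

theorem frobIe_succ_map_frobenius_le (hFF : FFinite p R) (a : Ideal R) :
    frobIe p (e + 1) R M (a.map (frobenius R p)) ≤ frobIe p e R M a := by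
  refine Submodule.span_le.2 ?_
  rintro _ ⟨φ, hφ, z, hz, rfl⟩
  rw [Ideal.map, Ideal.span, ← Submodule.mem_toAddSubmonoid, Submodule.span_eq_closure] at hz
  induction hz using AddSubmonoid.closure_induction with
  | mem z hz =>
    obtain ⟨c, -, _, ⟨y, hy, rfl⟩, rfl⟩ := hz
    exact apply_mul_frobenius_mem_frobIe hFF φ hφ c hy
  | zero => simp
  | add z w _ _ hz hw => simpa using add_mem hz hw

end FrobIe

theorem stmt14_general {R : Type u} [CommRing R]
    (p : ℕ) (hp : p.Prime) [CharP R p] (hFF : FFinite p R)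
    (M : Type v) [AddCommGroup M] [Module R M] (x : R) :
    (∀ e : ℕ,
      frobIe p (e + 1) R M (Ideal.span {x ^ (p * p ^ e - 1)}) ≤
        frobIe p e R M (Ideal.span {x ^ (p ^ e - 1)})) ∧
    (IsReduced R → x ∈ nonZeroDivisors R → FPurePair p R x →
      ∀ e : ℕ, frobIe p e R M (Ideal.span {x ^ (p ^ e - 1)}) = ⊤) := by
  have := Fact.mk hp
  refine ⟨fun e => le_trans (frobIe_mono ?_) (frobIe_succ_map_frobenius_le hFF _), ?_⟩
  · rw [Ideal.span_singleton_le_iff_mem, pow_mul_sub_one x hp.pos (pow_pos hp.pos e)]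
    exact Ideal.mul_mem_left _ _
      (Ideal.mem_map_of_mem (frobenius R p) (Ideal.mem_span_singleton_self _))
  · intro _ _ hFP e
    obtain ⟨φ, hφ, hφx⟩ := hFP e
    exact frobIe_eq_top_of_apply_eq_one φ hφ (Ideal.mem_span_singleton_self _) hφx

/-- Let `R` be an F-finite Noetherian ring of prime characteristic `p`
and `M` an `R`-module.  For every `x ∈ R` and every `q = pᵉ` one has
`I_{e+1}(x^{pq-1}, M) ⊆ I_e(x^{q-1}, M)`.  Moreover, if `R` is reduced, `x` is a
non-zerodivisor and the pair `(R, x)` is F-pure, then `I_e(x^{pᵉ-1}, M) = M` for every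
integer `e ≥ 0`. -/
theorem stmt14 {R : Type u} [CommRing R] [IsNoetherianRing R]
    (p : ℕ) (hp : p.Prime) [CharP R p] (hFF : FFinite p R)
    (M : Type v) [AddCommGroup M] [Module R M] (x : R) :
    (∀ e : ℕ,
      frobIe p (e + 1) R M (Ideal.span {x ^ (p * p ^ e - 1)}) ≤
        frobIe p e R M (Ideal.span {x ^ (p ^ e - 1)})) ∧
    (IsReduced R → x ∈ nonZeroDivisors R → FPurePair p R x →
      ∀ e : ℕ, frobIe p e R M (Ideal.span {x ^ (p ^ e - 1)}) = ⊤) :=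
  stmt14_general p hp hFF M x
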